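/- Let X be a Priestley space, V ⊆ X clopen, K₁ = ↑V and K₂ = ↑(K₁ \ V). If G₁ ⊇ G₂ ⊇ … ⊇ G_{2p} is a decreasing sequence of closed upsets with V = G₁ \ (G₂ \ (… \ (G_{2p-1} \ G_{2p})…)), then K₁ ⊆ G₁, K₂ ⊆ G₂, and G₁ \ G₂ ⊆ K₁ \ K₂. -/

import Mathlib

/-!
Write `V = G₁ \ D` with `D = G₂ \ (…)`. Then `V ⊆ G₁`, and since `D ⊆ G₂`, also
`G₁ \ V = G₁ ∩ D ⊆ G₂`. Everything else follows because `G₁` and `G₂` are upsets: `↑V ⊆ G₁`,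
`↑V \ V ⊆ G₁ \ V ⊆ G₂`, hence `↑(↑V \ V) ⊆ G₂`, and `G₁ \ G₂ ⊆ V` misses `G₂`.
-/

/-- The upset generated by a set. -/
def upSet {X : Type*} [Preorder X] (S : Set X) : Set X := {x | ∃ s ∈ S, s ≤ x}

/-- The right-nested iterated difference `a₁ \ (a₂ \ (… \ (aₙ₋₁ \ aₙ)…))` of a list. -/
def iterDiff {B : Type*} [BooleanAlgebra B] : List B → B
  | [] => ⊥
  | [x] => x
  | x :: y :: xs => x \ iterDiff (y :: xs)

section IterDiff

variable {B : Type*} [BooleanAlgebra B]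

lemma iterDiff_cons_le (x : B) (l : List B) : iterDiff (x :: l) ≤ x := by
  cases l with
  | nil => exact le_rfl
  | cons y ys => exact sdiff_le

lemma iterDiff_le_getElem_zero (l : List B) (h : 0 < l.length) : iterDiff l ≤ l[0] := by
  cases l with
  | nil => simp at h
  | cons x l => exact iterDiff_cons_le x l

lemma getElem_zero_sdiff_iterDiff_le (l : List B) (h : 1 < l.length) :
    l[0] \ iterDiff l ≤ l[1] := by
  match l, h with
  | x :: y :: l, _ =>
    calc x \ (x \ iterDiff (y :: l)) = x ⊓ iterDiff (y :: l) := sdiff_sdiff_right_self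
      _ ≤ y := inf_le_of_right_le (iterDiff_cons_le y l)

end IterDiff

section UpSet

variable {X : Type*} [Preorder X]

lemma subset_upSet (S : Set X) : S ⊆ upSet S := fun s hs => ⟨s, hs, le_rfl⟩

lemma upSet_subset {S U : Set X} (hU : IsUpperSet U) (hSU : S ⊆ U) : upSet S ⊆ U := by
  rintro x ⟨s, hs, hsx⟩
  exact hU hsx (hSU hs)

lemma upSet_upSet_sdiff_subset {V G₁ G₂ : Set X} (hG₁ : IsUpperSet G₁) (hG₂ : IsUpperSet G₂)
    (hVG₁ : V ⊆ G₁) (hG₁V : G₁ \ V ⊆ G₂) : upSet (upSet V \ V) ⊆ G₂ :=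
  upSet_subset hG₂ fun _ hx => hG₁V ⟨upSet_subset hG₁ hVG₁ hx.1, hx.2⟩

lemma sdiff_subset_upSet_sdiff_upSet_sdiff {V G₁ G₂ : Set X} (hG₁ : IsUpperSet G₁)
    (hG₂ : IsUpperSet G₂) (hVG₁ : V ⊆ G₁) (hG₁V : G₁ \ V ⊆ G₂) :
    G₁ \ G₂ ⊆ upSet V \ upSet (upSet V \ V) := by
  rintro x ⟨hx₁, hx₂⟩
  have hxV : x ∈ V := by
    by_contra hxV
    exact hx₂ (hG₁V ⟨hx₁, hxV⟩)
  exact ⟨subset_upSet V hxV,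
    fun hx => hx₂ (upSet_upSet_sdiff_subset hG₁ hG₂ hVG₁ hG₁V hx)⟩

end UpSet

theorem stmt13 {X : Type*} [PartialOrder X] [TopologicalSpace X]
    (V : Set X)
    (p : ℕ) (hp : 1 ≤ p) (G : Fin (2 * p) → Set X)
    (hG : ∀ i, IsClosed (G i) ∧ IsUpperSet (G i))
    (hVG : V = iterDiff (List.ofFn G))
    (K₁ K₂ : Set X) (hK₁ : K₁ = upSet V) (hK₂ : K₂ = upSet (K₁ \ V)) :
    K₁ ⊆ G ⟨0, by omega⟩ ∧ K₂ ⊆ G ⟨1, by omega⟩ ∧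
    G ⟨0, by omega⟩ \ G ⟨1, by omega⟩ ⊆ K₁ \ K₂ := by
  have hVG₁ : V ⊆ G ⟨0, by omega⟩ := by
    have h := iterDiff_le_getElem_zero (List.ofFn G) (by simp; omega)
    rwa [List.getElem_ofFn, ← hVG] at h
  have hG₁V : G ⟨0, by omega⟩ \ V ⊆ G ⟨1, by omega⟩ := by
    have h := getElem_zero_sdiff_iterDiff_le (List.ofFn G) (by simp; omega)
    rwa [List.getElem_ofFn, List.getElem_ofFn, ← hVG] at h
  have hG₁ := (hG ⟨0, by omega⟩).2
  have hG₂ := (hG ⟨1, by omega⟩).2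
  subst hK₁ hK₂
  exact ⟨upSet_subset hG₁ hVG₁, upSet_upSet_sdiff_subset hG₁ hG₂ hVG₁ hG₁V,
    sdiff_subset_upSet_sdiff_upSet_sdiff hG₁ hG₂ hVG₁ hG₁V⟩
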